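/- arXiv:1805.02967 — 3 statements merged into one kernel-verified Lean document; each statement's English description precedes it below -/
import Mathlib

section
/- The chain polytope of an ordinal sum Π₁ ◁ Π₂ of two finite posets is the free sum of the chain polytopes: C(Π₁ ◁ Π₂) = conv( (C(Π₁) × {0}) ∪ ({0} × C(Π₂)) ). -/
/-!
Split a point `g` of `C(Π₁ ◁ Π₂)` into its parts `g₁`, `g₂` supported on `Π₁` and `Π₂`, and let
`Mᵢ` be the largest sum of `gᵢ` over a chain of `Πᵢ`, so that `gᵢ ∈ Mᵢ • C(Πᵢ)`. A maximizing chain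
of `Π₁` followed by one of `Π₂` is a chain of the ordinal sum, hence `M₁ + M₂ ≤ 1`, and `g` is a
convex combination of a point of `C(Π₁) × {0}`, a point of `{0} × C(Π₂)` and the origin.
Conversely, a chain of the ordinal sum meets each summand in a chain, so both pieces lie in
`C(Π₁ ◁ Π₂)`, which is convex.
-/

open Finset

/-- The chain polytope of a finite poset `α`. -/
def chainPoly (α : Type*) [PartialOrder α] [Fintype α] : Set (α → ℝ) :=
  {g | (∀ i, 0 ≤ g i) ∧ ∀ s : Finset α, IsChain (· ≤ ·) (s : Set α) → ∑ i ∈ s, g i ≤ 1}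

instance (α β : Type*) [Fintype α] [Fintype β] : Fintype (α ⊕ₗ β) :=
  inferInstanceAs (Fintype (α ⊕ β))

theorem Convex.smul_add_smul_mem_of_zero_mem {𝕜 E : Type*} [Field 𝕜] [LinearOrder 𝕜]
    [IsStrictOrderedRing 𝕜] [AddCommGroup E] [Module 𝕜 E] {s : Set E} (hs : Convex 𝕜 s)
    (h0 : (0 : E) ∈ s) {x y : E} (hx : x ∈ s) (hy : y ∈ s) {a b : 𝕜} (ha : 0 ≤ a) (hb : 0 ≤ b)
    (hab : a + b ≤ 1) : a • x + b • y ∈ s := by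
  obtain ⟨z, hz, hz_eq⟩ := hs.exists_mem_add_smul_eq hx hy ha hb
  rw [← hz_eq]
  exact hs.smul_mem_of_zero_mem h0 hz ⟨add_nonneg ha hb, hab⟩

theorem exists_isChain_forall_sum_le {α : Type*} [LE α] [Fintype α] (f : α → ℝ) :
    ∃ s : Finset α, IsChain (· ≤ ·) (s : Set α) ∧
      ∀ t : Finset α, IsChain (· ≤ ·) (t : Set α) → ∑ i ∈ t, f i ≤ ∑ i ∈ s, f i := by
  classical
  obtain ⟨s, hs, hmax⟩ := (univ.filter fun s : Finset α => IsChain (· ≤ ·) (s : Set α))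
    |>.exists_max_image (fun s => ∑ i ∈ s, f i) ⟨∅, by simp⟩
  exact ⟨s, (mem_filter.1 hs).2, fun t ht => hmax t (mem_filter.2 ⟨mem_univ _, ht⟩)⟩

def OrderEmbedding.sumLexInl (α β : Type*) [PartialOrder α] [PartialOrder β] : α ↪o α ⊕ₗ β :=
  OrderEmbedding.ofMapLEIff Sum.inlₗ fun _ _ => Sum.Lex.inl_le_inl_iff

def OrderEmbedding.sumLexInr (α β : Type*) [PartialOrder α] [PartialOrder β] : β ↪o α ⊕ₗ β :=
  OrderEmbedding.ofMapLEIff Sum.inrₗ fun _ _ => Sum.Lex.inr_le_inr_iff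

theorem isChain_map_toLex_disjSum {α β : Type*} [PartialOrder α] [PartialOrder β]
    {s : Finset α} {t : Finset β} (hs : IsChain (· ≤ ·) (s : Set α))
    (ht : IsChain (· ≤ ·) (t : Set β)) :
    IsChain (· ≤ ·) ((s.disjSum t).map toLex.toEmbedding : Set (α ⊕ₗ β)) := by
  have hcoe : ((s.disjSum t).map toLex.toEmbedding : Set (α ⊕ₗ β)) =
      OrderEmbedding.sumLexInl α β '' s ∪ OrderEmbedding.sumLexInr α β '' t := by
    ext x
    obtain ⟨a | b, rfl⟩ := toLex.surjective x <;>
      simp [OrderEmbedding.sumLexInl, OrderEmbedding.sumLexInr]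
  rw [hcoe]
  refine isChain_union.2 ⟨hs.image _, ht.image _, ?_⟩
  rintro _ ⟨a, -, rfl⟩ _ ⟨b, -, rfl⟩ -
  exact Or.inl (Sum.Lex.inl_le_inr a b)

section ChainPoly

variable {α γ : Type*} [PartialOrder α] [Fintype α] [PartialOrder γ] [Fintype γ]

theorem zero_mem_chainPoly : (0 : α → ℝ) ∈ chainPoly α :=
  ⟨fun _ => le_rfl, fun s _ => by simp⟩

theorem convex_chainPoly : Convex ℝ (chainPoly α) := by
  rintro x ⟨hx0, hx⟩ y ⟨hy0, hy⟩ a b ha hb hab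
  refine ⟨fun i => add_nonneg (mul_nonneg ha (hx0 i)) (mul_nonneg hb (hy0 i)), fun s hs => ?_⟩
  calc ∑ i ∈ s, (a • x + b • y) i = a * ∑ i ∈ s, x i + b * ∑ i ∈ s, y i := by
        simp [sum_add_distrib, mul_sum]
    _ ≤ a * 1 + b * 1 := by gcongr <;> simp_all
    _ = 1 := by rw [mul_one, mul_one, hab]

theorem mem_chainPoly_of_eq_zero_off_range (e : α ↪o γ) {f : α → ℝ} (hf : f ∈ chainPoly α)
    {F : γ → ℝ} (hFe : ∀ a, F (e a) = f a) (hF0 : ∀ c ∉ Set.range e, F c = 0) :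
    F ∈ chainPoly γ := by
  refine ⟨fun c => ?_, fun s hs => ?_⟩
  · by_cases hc : c ∈ Set.range e
    · obtain ⟨a, rfl⟩ := hc
      exact hFe a ▸ hf.1 a
    · exact (hF0 c hc).ge
  · rw [← sum_preimage e s e.injective.injOn F fun c _ => hF0 c]
    simp only [hFe]
    exact hf.2 _ (by simpa using hs.preimage_embedding e)

theorem exists_mem_chainPoly_eq_smul {f : α → ℝ} (hf : ∀ i, 0 ≤ f i) {M : ℝ}
    (hM : ∀ s : Finset α, IsChain (· ≤ ·) (s : Set α) → ∑ i ∈ s, f i ≤ M) :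
    ∃ p ∈ chainPoly α, f = M • p := by
  have hM0 : 0 ≤ M := by simpa using hM ∅ (by simp)
  rcases hM0.eq_or_lt with rfl | hMpos
  · refine ⟨0, zero_mem_chainPoly, funext fun i => ?_⟩
    have := hM {i} (by simp)
    simp only [sum_singleton] at this
    simp [le_antisymm this (hf i)]
  · refine ⟨M⁻¹ • f, ⟨fun i => ?_, fun s hs => ?_⟩, (smul_inv_smul₀ hMpos.ne' f).symm⟩
    · simpa using mul_nonneg (inv_nonneg.2 hM0) (hf i)
    · simp only [Pi.smul_apply, smul_eq_mul, ← mul_sum]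
      calc M⁻¹ * ∑ i ∈ s, f i ≤ M⁻¹ * M := by gcongr; exact hM s hs
        _ = 1 := inv_mul_cancel₀ hMpos.ne'

end ChainPoly

section OrdinalSum

variable {α β : Type*} [PartialOrder α] [Fintype α] [PartialOrder β] [Fintype β]

theorem elim_zero_mem_chainPoly_sumLex {f : α → ℝ} (hf : f ∈ chainPoly α) :
    (fun i : α ⊕ₗ β => Sum.elim f (0 : β → ℝ) (ofLex i)) ∈ chainPoly (α ⊕ₗ β) :=
  mem_chainPoly_of_eq_zero_off_range (OrderEmbedding.sumLexInl α β) hf (fun _ => rfl) <| by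
    rintro (a | b) ha
    · exact absurd ⟨a, rfl⟩ ha
    · rfl

theorem zero_elim_mem_chainPoly_sumLex {f : β → ℝ} (hf : f ∈ chainPoly β) :
    (fun i : α ⊕ₗ β => Sum.elim (0 : α → ℝ) f (ofLex i)) ∈ chainPoly (α ⊕ₗ β) :=
  mem_chainPoly_of_eq_zero_off_range (OrderEmbedding.sumLexInr α β) hf (fun _ => rfl) <| by
    rintro (a | b) hb
    · rfl
    · exact absurd ⟨b, rfl⟩ hb

theorem sum_add_sum_le_one_of_mem_chainPoly {g : α ⊕ₗ β → ℝ} (hg : g ∈ chainPoly (α ⊕ₗ β))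
    {s : Finset α} {t : Finset β} (hs : IsChain (· ≤ ·) (s : Set α))
    (ht : IsChain (· ≤ ·) (t : Set β)) :
    ∑ a ∈ s, g (Sum.inlₗ a) + ∑ b ∈ t, g (Sum.inrₗ b) ≤ 1 := by
  simpa [sum_disjSum] using hg.2 _ (isChain_map_toLex_disjSum hs ht)

end OrdinalSum

/-- The chain polytope of an ordinal sum `Π₁ ◁ Π₂` is the free sum of the chain
polytopes: the convex hull of `C(Π₁) × {0}` together with `{0} × C(Π₂)`. -/
theorem stmt_7 (α β : Type*) [PartialOrder α] [Fintype α] [PartialOrder β] [Fintype β] :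
    chainPoly (α ⊕ₗ β)
      = convexHull ℝ
          (((fun f => fun i : α ⊕ₗ β => Sum.elim f (0 : β → ℝ) (ofLex i)) '' chainPoly α) ∪
           ((fun g => fun i : α ⊕ₗ β => Sum.elim (0 : α → ℝ) g (ofLex i)) '' chainPoly β)) := by
  refine Set.Subset.antisymm (fun g hg => ?_) (convexHull_min ?_ convex_chainPoly)
  · obtain ⟨s, hs, hs_max⟩ := exists_isChain_forall_sum_le fun a => g (Sum.inlₗ a)
    obtain ⟨t, ht, ht_max⟩ := exists_isChain_forall_sum_le fun b => g (Sum.inrₗ b)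
    obtain ⟨p, hp, hgp⟩ := exists_mem_chainPoly_eq_smul (fun a => hg.1 _) hs_max
    obtain ⟨q, hq, hgq⟩ := exists_mem_chainPoly_eq_smul (fun b => hg.1 _) ht_max
    have hg_eq : g =
        (∑ a ∈ s, g (Sum.inlₗ a)) • (fun i : α ⊕ₗ β => Sum.elim p (0 : β → ℝ) (ofLex i)) +
        (∑ b ∈ t, g (Sum.inrₗ b)) • (fun i : α ⊕ₗ β => Sum.elim (0 : α → ℝ) q (ofLex i)) := by
      funext i
      obtain ⟨a | b, rfl⟩ := toLex.surjective i
      · simpa using congrFun hgp a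
      · simpa using congrFun hgq b
    rw [hg_eq]
    apply Convex.smul_add_smul_mem_of_zero_mem (convex_convexHull ℝ _)
    · refine subset_convexHull ℝ _ (Or.inl ⟨0, zero_mem_chainPoly, funext fun i => ?_⟩)
      obtain ⟨a | b, rfl⟩ := toLex.surjective i <;> rfl
    · exact subset_convexHull ℝ _ (Or.inl ⟨p, hp, rfl⟩)
    · exact subset_convexHull ℝ _ (Or.inr ⟨q, hq, rfl⟩)
    · exact sum_nonneg fun _ _ => hg.1 _
    · exact sum_nonneg fun _ _ => hg.1 _
    · exact sum_add_sum_le_one_of_mem_chainPoly hg hs ht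
  · rintro _ (⟨f, hf, rfl⟩ | ⟨f, hf, rfl⟩)
    · exact elim_zero_mem_chainPoly_sumLex hf
    · exact zero_elim_mem_chainPoly_sumLex hf
end

section
/- The order polytope of an ordinal sum satisfies O(Π₁ ◁ Π₂) = conv( (O(Π₁) × 1_{Π₂}) ∪ (0_{Π₁} × O(Π₂)) ), i.e., it is the convex hull of the copy of O(Π₁) with all Π₂-coordinates equal to 1, together with the copy of O(Π₂) with all Π₁-coordinates equal to 0. -/
/-!
Let `t` be the largest coordinate of `x ∈ O(Π₁ ◁ Π₂)` on `Π₁` (or `0` if `Π₁` is empty). Every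
`Π₁`-coordinate of `x` is at most `t` and every `Π₂`-coordinate at least `t`, so
`x = t • (x|Π₁ / t, 1) + (1 - t) • (0, (x|Π₂ - t) / (1 - t))`, and both points lie in the two
pieces. Conversely both pieces lie in the convex set `O(Π₁ ◁ Π₂)`.
-/

/-- The order polytope of a finite poset `α`. -/
def orderPoly (α : Type*) [PartialOrder α] [Fintype α] : Set (α → ℝ) :=
  {x | (∀ i, 0 ≤ x i ∧ x i ≤ 1) ∧ ∀ i j : α, i ≤ j → x i ≤ x j}

open Set
open scoped Pointwise

namespace Sum.Lex

variable {α β γ : Type*}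

def elim (f : α → γ) (g : β → γ) (i : α ⊕ₗ β) : γ :=
  Sum.elim f g (ofLex i)

@[simp] theorem elim_inlₗ (f : α → γ) (g : β → γ) (a : α) : elim f g (inlₗ a) = f a := rfl

@[simp] theorem elim_inrₗ (f : α → γ) (g : β → γ) (b : β) : elim f g (inrₗ b) = g b := rfl

theorem elim_comp_inlₗ_inrₗ (x : α ⊕ₗ β → γ) :
    elim (fun a => x (inlₗ a)) (fun b => x (inrₗ b)) = x := by
  funext i; cases i with | _ i => cases i <;> rfl

theorem monotone_elim_iff [Preorder α] [Preorder β] [Preorder γ] {f : α → γ} {g : β → γ} :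
    Monotone (elim f g) ↔ Monotone f ∧ Monotone g ∧ ∀ a b, f a ≤ g b := by
  refine ⟨fun h => ⟨fun a a' haa => h (inl_le_inl_iff.2 haa),
    fun b b' hbb => h (inr_le_inr_iff.2 hbb), fun a b => h (inl_le_inr a b)⟩, ?_⟩
  rintro ⟨hf, hg, hfg⟩ i j hij
  cases i with | _ i => cases j with | _ j =>
  rcases i with a | b <;> rcases j with a' | b'
  · exact hf (inl_le_inl_iff.1 hij)
  · exact hfg a b'
  · exact absurd hij not_inr_le_inl
  · exact hg (inr_le_inr_iff.1 hij)

end Sum.Lex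

section OrderPoly

open Sum.Lex

variable {α β : Type*} [PartialOrder α] [Fintype α] [PartialOrder β] [Fintype β]

theorem mem_orderPoly_iff {x : α → ℝ} : x ∈ orderPoly α ↔ 0 ≤ x ∧ x ≤ 1 ∧ Monotone x := by
  simp only [orderPoly, mem_ofPred_eq, Pi.le_def, forall_and, Pi.zero_apply, Pi.one_apply,
    Monotone, and_assoc]

theorem convex_orderPoly : Convex ℝ (orderPoly α) := by
  intro x hx y hy a b ha hb hab
  obtain ⟨hx0, hx1, hxm⟩ := mem_orderPoly_iff.1 hx
  obtain ⟨hy0, hy1, hym⟩ := mem_orderPoly_iff.1 hy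
  exact mem_orderPoly_iff.2 ⟨add_nonneg (smul_nonneg ha hx0) (smul_nonneg hb hy0),
    convex_Iic (1 : α → ℝ) hx1 hy1 ha hb hab, (hxm.const_smul ha).add (hym.const_smul hb)⟩

theorem elim_mem_orderPoly_iff {f : α → ℝ} {g : β → ℝ} :
    elim f g ∈ orderPoly (α ⊕ₗ β) ↔ f ∈ orderPoly α ∧ g ∈ orderPoly β ∧ ∀ a b, f a ≤ g b := by
  simp only [mem_orderPoly_iff, monotone_elim_iff, Pi.le_def, Lex.forall, Sum.forall,
    elim_inlₗ, elim_inrₗ, Pi.zero_apply, Pi.one_apply]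
  tauto

theorem zero_mem_orderPoly : (0 : α → ℝ) ∈ orderPoly α :=
  mem_orderPoly_iff.2 ⟨le_rfl, zero_le_one, monotone_const⟩

theorem one_mem_orderPoly : (1 : α → ℝ) ∈ orderPoly α :=
  mem_orderPoly_iff.2 ⟨zero_le_one, le_rfl, monotone_const⟩

theorem elim_one_mem_orderPoly {f : α → ℝ} (hf : f ∈ orderPoly α) :
    elim f (1 : β → ℝ) ∈ orderPoly (α ⊕ₗ β) :=
  elim_mem_orderPoly_iff.2 ⟨hf, one_mem_orderPoly, fun a _ => (mem_orderPoly_iff.1 hf).2.1 a⟩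

theorem elim_zero_mem_orderPoly {g : β → ℝ} (hg : g ∈ orderPoly β) :
    elim (0 : α → ℝ) g ∈ orderPoly (α ⊕ₗ β) :=
  elim_mem_orderPoly_iff.2 ⟨zero_mem_orderPoly, hg, fun _ b => (mem_orderPoly_iff.1 hg).1 b⟩

theorem mem_smul_orderPoly {y : α → ℝ} {t : ℝ} (hy0 : 0 ≤ y) (hyt : ∀ i, y i ≤ t)
    (hy : Monotone y) : y ∈ t • orderPoly α := by
  have hinv : ∀ i, 0 ≤ t⁻¹ := fun i => inv_nonneg.2 ((hy0 i).trans (hyt i))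
  -- For `t = 0` the witness is `0⁻¹ • y = 0`, which works because then `y = 0`.
  refine ⟨t⁻¹ • y, mem_orderPoly_iff.2 ⟨fun i => mul_nonneg (hinv i) (hy0 i),
    fun i => inv_mul_le_one_of_le₀ (hyt i) ((hy0 i).trans (hyt i)),
    fun i j hij => mul_le_mul_of_nonneg_left (hy hij) (hinv i)⟩, ?_⟩
  funext i
  rcases eq_or_ne t 0 with rfl | ht
  · simp [le_antisymm (hyt i) (hy0 i)]
  · simp [ht]

theorem exists_mem_segment_of_elim_mem_orderPoly {f : α → ℝ} {g : β → ℝ}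
    (hx : elim f g ∈ orderPoly (α ⊕ₗ β)) :
    ∃ h ∈ orderPoly α, ∃ k ∈ orderPoly β, elim f g ∈ segment ℝ (elim h 1) (elim 0 k) := by
  obtain ⟨hf, hg, hfg⟩ := elim_mem_orderPoly_iff.1 hx
  obtain ⟨hf0, hf1, hfm⟩ := mem_orderPoly_iff.1 hf
  obtain ⟨hg0, hg1, hgm⟩ := mem_orderPoly_iff.1 hg
  -- `t` is the largest value on `α`, or `0` if `α` is empty (the junk value of `⨆` over `∅`).
  set t := ⨆ a, f a
  have hft : ∀ a, f a ≤ t := le_ciSup (finite_range f).bddAbove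
  have htg : ∀ b, t ≤ g b := fun b => Real.iSup_le (hfg · b) (hg0 b)
  have ht1 : t ≤ 1 := Real.iSup_le hf1 zero_le_one
  obtain ⟨h, hh, hfh⟩ := mem_smul_orderPoly hf0 hft hfm
  obtain ⟨k, hk, hgk⟩ := mem_smul_orderPoly (y := fun b => g b - t) (t := 1 - t)
    (fun b => sub_nonneg.2 (htg b)) (fun b => sub_le_sub_right (hg1 b) t)
    (fun _ _ hbb => sub_le_sub_right (hgm hbb) t)
  refine ⟨h, hh, k, hk, t, 1 - t, Real.iSup_nonneg hf0, sub_nonneg.2 ht1, add_sub_cancel _ _, ?_⟩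
  funext i
  cases i with | _ i => cases i with
  | inl a =>
    have ha : t * h a = f a := congrFun hfh a
    simp only [Pi.add_apply, Pi.smul_apply, smul_eq_mul, elim_inlₗ, Pi.zero_apply]
    linarith
  | inr b =>
    have hb : (1 - t) * k b = g b - t := congrFun hgk b
    simp only [Pi.add_apply, Pi.smul_apply, smul_eq_mul, elim_inrₗ, Pi.one_apply]
    linarith

end OrderPoly

/-- The order polytope of an ordinal sum `Π₁ ◁ Π₂` is the convex hull of the copy of
`O(Π₁)` with all `Π₂`-coordinates equal to 1, together with the copy of `O(Π₂)` with
all `Π₁`-coordinates equal to 0. -/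
theorem stmt_8 (α β : Type*) [PartialOrder α] [Fintype α] [PartialOrder β] [Fintype β] :
    orderPoly (α ⊕ₗ β)
      = convexHull ℝ
          (((fun f => fun i : α ⊕ₗ β => Sum.elim f (fun _ => (1 : ℝ)) (ofLex i)) ''
              orderPoly α) ∪
           ((fun g => fun i : α ⊕ₗ β => Sum.elim (fun _ => (0 : ℝ)) g (ofLex i)) ''
              orderPoly β)) := by
  change orderPoly (α ⊕ₗ β) = convexHull ℝ
    ((fun f => Sum.Lex.elim f 1) '' orderPoly α ∪ (fun g => Sum.Lex.elim 0 g) '' orderPoly β)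
  refine Subset.antisymm (fun x hx => ?_) (convexHull_min ?_ convex_orderPoly)
  · rw [← Sum.Lex.elim_comp_inlₗ_inrₗ x] at hx ⊢
    obtain ⟨h, hh, k, hk, hseg⟩ := exists_mem_segment_of_elim_mem_orderPoly hx
    refine segment_subset_convexHull ?_ ?_ hseg
    exacts [Or.inl ⟨h, hh, rfl⟩, Or.inr ⟨k, hk, rfl⟩]
  · rintro _ (⟨f, hf, rfl⟩ | ⟨g, hg, rfl⟩)
    exacts [elim_one_mem_orderPoly hf, elim_zero_mem_orderPoly hg]
end

section
/- If Π = Π₁ ◁ Π₂ is an ordinal sum of finite posets, then the h*-polynomial of the order polytope of Π is the product of the h*-polynomials of the order polytopes of Π₁ and Π₂: h*_Π(z) = h*_{Π₁}(z) · h*_{Π₂}(z). -/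
/-!
For a lattice point `z` of `k • O(Π₁ ◁ Π₂)`, let `t` be the maximum of `z` on `Π₁`. Then `z|Π₁`
is a lattice point of `t • O(Π₁)` attaining `t`, and `z|Π₂ - t` is an arbitrary lattice point
of `(k - t) • O(Π₂)`. The points of `t • O(Π₁)` attaining `t` have generating function
`(1 - z) Ehr_{Π₁}(z)`, so `Ehr_{Π₁ ◁ Π₂} = (1 - z) Ehr_{Π₁} Ehr_{Π₂}`; multiplying by
`(1 - z) ^ (|Π₁| + |Π₂| + 1)` gives the product formula for `h*`.
-/

open scoped Pointwise

/-- The Ehrhart series of the order polytope of `α`: the power series whose `k`-th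
coefficient is the number of lattice points of the `k`-th dilate of `O(α)`. -/
noncomputable def ehrSeries (α : Type*) [PartialOrder α] [Fintype α] : PowerSeries ℤ :=
  PowerSeries.mk fun k =>
    (Nat.card {x : α → ℤ // (fun i => (x i : ℝ)) ∈ (k : ℝ) • orderPoly α} : ℤ)

/-- The `h*`-polynomial of the order polytope of `α` (as a power series):
`h*(z) = Ehr(z) · (1 − z)^(d+1)` where `d = #α`. -/
noncomputable def hstar (α : Type*) [PartialOrder α] [Fintype α] : PowerSeries ℤ :=
  ehrSeries α * (1 - PowerSeries.X) ^ (Fintype.card α + 1)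

open Finset PowerSeries

theorem Sum.Lex.monotone_iff {α β γ : Type*} [Preorder α] [Preorder β] [Preorder γ]
    {f : α ⊕ₗ β → γ} :
    Monotone f ↔ Monotone (fun a => f (toLex (.inl a))) ∧ Monotone (fun b => f (toLex (.inr b))) ∧
      ∀ a b, f (toLex (.inl a)) ≤ f (toLex (.inr b)) := by
  refine ⟨fun hf => ⟨hf.comp Sum.Lex.inl_mono, hf.comp Sum.Lex.inr_mono,
    fun a b => hf (Sum.Lex.inl_le_inr a b)⟩, ?_⟩
  rintro ⟨hl, hr, hlr⟩ (a | b) (a' | b') h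
  · exact hl (Sum.Lex.inl_le_inl_iff.mp h)
  · exact hlr a b'
  · exact absurd h Sum.Lex.not_inr_le_inl
  · exact hr (Sum.Lex.inr_le_inr_iff.mp h)

section LatticePoints

open scoped Classical

variable {α β : Type*} [Preorder α] [Fintype α] [Preorder β] [Fintype β]

/-- The lattice points of `k • O(α)`, as `ℕ`-valued maps. -/
noncomputable def latticePoints (α : Type*) [Preorder α] [Fintype α] (k : ℕ) : Finset (α → ℕ) :=
  {x ∈ Fintype.piFinset fun _ => range (k + 1) | Monotone x}

/-- The lattice points of `k • O(α)` lying in no smaller dilate. Since `univ.sup` is `0` on an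
empty poset, for `k = 0` these are all the lattice points of `0 • O(α)`. -/
noncomputable def exactPoints (α : Type*) [Preorder α] [Fintype α] (k : ℕ) : Finset (α → ℕ) :=
  {x ∈ latticePoints α k | univ.sup x = k}

theorem mem_latticePoints {k : ℕ} {x : α → ℕ} :
    x ∈ latticePoints α k ↔ (∀ i, x i ≤ k) ∧ Monotone x := by
  simp [latticePoints]

theorem card_latticePoints_eq_sum (k : ℕ) :
    #(latticePoints α k) = ∑ t ∈ range (k + 1), #(exactPoints α t) := by
  rw [card_eq_sum_card_fiberwise (f := fun x => univ.sup x) fun x hx =>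
    mem_range_succ_iff.2 (Finset.sup_le fun i _ => (mem_latticePoints.1 hx).1 i)]
  refine sum_congr rfl fun t ht => congrArg card (ext fun x => ?_)
  simp only [exactPoints, mem_filter, mem_latticePoints]
  constructor
  · rintro ⟨⟨-, hx⟩, rfl⟩
    exact ⟨⟨fun i => le_sup (mem_univ i), hx⟩, rfl⟩
  · rintro ⟨⟨-, hx⟩, rfl⟩
    exact ⟨⟨fun i => (le_sup (mem_univ i)).trans (mem_range_succ_iff.1 ht), hx⟩, rfl⟩

theorem card_latticePoints_lex_sum_fiber {k t : ℕ} (ht : t ≤ k) :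
    #{z ∈ latticePoints (α ⊕ₗ β) k | univ.sup (fun a => z (toLex (.inl a))) = t} =
      #(exactPoints α t) * #(latticePoints β (k - t)) := by
  rw [← card_product]
  refine card_nbij' (fun z => (fun a => z (toLex (.inl a)), fun b => z (toLex (.inr b)) - t))
    (fun p c => Sum.elim p.1 (fun b => p.2 b + t) (ofLex c)) ?_ ?_ ?_ ?_
  · rintro z hz
    simp only [coe_filter, mem_latticePoints, Sum.Lex.monotone_iff, Set.mem_ofPred_eq] at hz
    obtain ⟨⟨hk, hl, hr, -⟩, hsup⟩ := hz
    simp only [coe_product, Set.mem_prod, mem_coe, exactPoints, mem_filter, mem_latticePoints]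
    refine ⟨⟨⟨fun a => hsup ▸ le_sup (f := fun a => z (toLex (.inl a))) (mem_univ a), hl⟩, hsup⟩,
      fun b => Nat.sub_le_sub_right (hk _) t, fun b b' h => Nat.sub_le_sub_right (hr h) t⟩
  · rintro ⟨x, y⟩ hxy
    simp only [coe_product, Set.mem_prod, mem_coe, exactPoints, mem_filter,
      mem_latticePoints] at hxy
    obtain ⟨⟨⟨hxt, hx⟩, hsup⟩, hyk, hy⟩ := hxy
    simp only [coe_filter, mem_latticePoints, Sum.Lex.monotone_iff, Set.mem_ofPred_eq]
    refine ⟨⟨?_, hx, fun b b' h => Nat.add_le_add_right (hy h) t,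
      fun a b => (hxt a).trans (Nat.le_add_left t (y b))⟩, hsup⟩
    rintro (a | b)
    · exact (hxt a).trans ht
    · exact Nat.add_le_of_le_sub ht (hyk b)
  · rintro z hz
    simp only [coe_filter, mem_latticePoints, Sum.Lex.monotone_iff, Set.mem_ofPred_eq] at hz
    obtain ⟨⟨-, -, -, hlr⟩, hsup⟩ := hz
    funext c
    rcases c with a | b
    · rfl
    · exact Nat.sub_add_cancel (hsup ▸ Finset.sup_le fun a _ => hlr a b)
  · rintro ⟨x, y⟩ -
    exact Prod.ext rfl (funext fun b => Nat.add_sub_cancel (y b) t)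

theorem card_latticePoints_lex_sum (k : ℕ) :
    #(latticePoints (α ⊕ₗ β) k) =
      ∑ t ∈ range (k + 1), #(exactPoints α t) * #(latticePoints β (k - t)) := by
  rw [card_eq_sum_card_fiberwise (f := fun z => univ.sup fun a => z (toLex (.inl a)))
    fun z hz => mem_range_succ_iff.2 (Finset.sup_le fun a _ => (mem_latticePoints.1 hz).1 _)]
  exact sum_congr rfl fun t ht => card_latticePoints_lex_sum_fiber (mem_range_succ_iff.1 ht)

end LatticePoints

section Ehrhart

variable {α β : Type*} [PartialOrder α] [Fintype α] [PartialOrder β] [Fintype β]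

theorem mem_smul_orderPoly_iff {c : ℝ} (hc : 0 ≤ c) {x : α → ℝ} :
    x ∈ c • orderPoly α ↔ (∀ i, 0 ≤ x i ∧ x i ≤ c) ∧ Monotone x := by
  rcases hc.eq_or_lt with rfl | hc
  · rw [Set.zero_smul_set ⟨0, by simp [orderPoly]⟩, Set.mem_zero]
    constructor
    · rintro rfl
      exact ⟨fun _ => ⟨le_rfl, le_rfl⟩, fun _ _ _ => le_rfl⟩
    · rintro ⟨hx, -⟩
      funext i
      exact le_antisymm (hx i).2 (hx i).1
  · rw [Set.mem_smul_set_iff_inv_smul_mem₀ hc.ne']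
    simp [orderPoly, Monotone, inv_mul_le_iff₀ hc, mul_inv_cancel_left₀ hc.ne',
      mul_nonneg_iff_of_pos_left (inv_pos.2 hc)]

theorem intCast_mem_smul_orderPoly_iff {k : ℕ} {x : α → ℤ} :
    (fun i => (x i : ℝ)) ∈ (k : ℝ) • orderPoly α ↔
      x ∈ (latticePoints α k).map (.arrowCongrRight Nat.castEmbedding) := by
  rw [mem_smul_orderPoly_iff (Nat.cast_nonneg k), mem_map]
  simp only [mem_latticePoints, Function.Embedding.arrowCongrRight_apply, Function.comp_def,
    Nat.castEmbedding_apply, Monotone, Int.cast_le, funext_iff]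
  constructor
  · rintro ⟨hk, hx⟩
    have hk (i : α) : 0 ≤ x i ∧ x i ≤ k := by exact_mod_cast hk i
    refine ⟨fun i => (x i).toNat, ⟨fun i => ?_, fun i j h => ?_⟩, fun i => ?_⟩
    · exact Int.toNat_le.2 (hk i).2
    · exact Int.toNat_le_toNat (hx h)
    · exact Int.toNat_of_nonneg (hk i).1
  · rintro ⟨y, ⟨hk, hy⟩, hxy⟩
    simp only [← hxy]
    exact ⟨fun i => ⟨by positivity, by exact_mod_cast hk i⟩, fun i j h => by exact_mod_cast hy h⟩

theorem coeff_ehrSeries (k : ℕ) : coeff k (ehrSeries α) = #(latticePoints α k) := by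
  rw [ehrSeries, coeff_mk, Nat.card_congr (Equiv.subtypeEquivRight fun x =>
    intCast_mem_smul_orderPoly_iff), Nat.card_eq_finsetCard, card_map]

theorem ehrSeries_mul_one_sub_X :
    ehrSeries α * (1 - X) = PowerSeries.mk fun t => (#(exactPoints α t) : ℤ) := by
  have hgeom :
      ehrSeries α = (PowerSeries.mk fun t => (#(exactPoints α t) : ℤ)) * PowerSeries.mk 1 := by
    ext k
    simp [coeff_ehrSeries, coeff_mul, Nat.sum_antidiagonal_eq_sum_range_succ_mk,
      card_latticePoints_eq_sum]
  rw [hgeom, mul_assoc, mk_one_mul_one_sub_eq_one, mul_one]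

theorem ehrSeries_lex_sum : ehrSeries (α ⊕ₗ β) = ehrSeries α * (1 - X) * ehrSeries β := by
  ext k
  simp [ehrSeries_mul_one_sub_X, coeff_ehrSeries, coeff_mul,
    Nat.sum_antidiagonal_eq_sum_range_succ_mk, card_latticePoints_lex_sum]

end Ehrhart

/-- The `h*`-polynomial of the order polytope of an ordinal sum `Π₁ ◁ Π₂` is the
product of the `h*`-polynomials of the order polytopes of `Π₁` and `Π₂`. -/
theorem stmt_9 (α β : Type*) [PartialOrder α] [Fintype α] [PartialOrder β] [Fintype β] :
    hstar (α ⊕ₗ β) = hstar α * hstar β := by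
  rw [hstar, hstar, hstar, ehrSeries_lex_sum,
    show Fintype.card (α ⊕ₗ β) = Fintype.card α + Fintype.card β from Fintype.card_sum]
  ring
end
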